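/- For any symmetric positive semi-definite matrix L of size p and the map (A,B) ↦ ⟨⟨L, Bᵗ A^{-1} B⟩⟩^β = (tr(L Bᵗ A^{-1} B))^β with β ≥ 1, the map is jointly convex on pairs (A,B) with A symmetric positive definite q×q and B ∈ ℝ^{q×p}. -/

import Mathlib

/-!
The Schur complement criterion says that `fromBlocks A B Bᴴ D` is positive semidefinite exactly
when `Bᴴ A⁻¹ B ≤ D` in the Loewner order. Since the block matrices
`fromBlocks Aᵢ Bᵢ Bᵢᴴ (Bᵢᴴ Aᵢ⁻¹ Bᵢ)` are positive semidefinite, so is any convex combination of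
them, which is precisely the operator convexity of `(A, B) ↦ Bᴴ A⁻¹ B`. Pairing with a positive
semidefinite `L` is monotone and linear, hence `(A, B) ↦ ⟪L, Bᵀ A⁻¹ B⟫` is a nonnegative convex
function, and composing with the convex increasing map `t ↦ t ^ β` on `[0, ∞)` preserves
convexity.
-/

open Matrix

noncomputable def fip {m n : ℕ} (A B : Matrix (Fin m) (Fin n) ℝ) : ℝ := (Aᵀ * B).trace

open Set
open scoped MatrixOrder ComplexOrder

namespace Matrix

variable {𝕜 : Type*} [RCLike 𝕜] {m n : Type*} [Fintype m] [Fintype n]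

omit [Fintype n] in
theorem convex_setOf_posDef : Convex ℝ {A : Matrix n n 𝕜 | A.PosDef} := by
  intro A₁ hA₁ A₂ hA₂ a b ha hb hab
  rcases ha.eq_or_lt with rfl | ha
  · simpa [show b = 1 by linarith] using hA₂
  · exact (hA₁.smul ha).add_posSemidef (hA₂.posSemidef.smul hb)

theorem PosDef.posSemidef_fromBlocks_conjTranspose_mul_inv_mul [DecidableEq m]
    {A : Matrix m m 𝕜} (hA : A.PosDef) (B : Matrix m n 𝕜) :
    (fromBlocks A B Bᴴ (Bᴴ * A⁻¹ * B)).PosSemidef := by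
  have := hA.isUnit.invertible
  exact (hA.fromBlocks₁₁ B _).mpr (by simpa using PosSemidef.zero)

theorem convexOn_conjTranspose_mul_inv_mul [DecidableEq m] :
    ConvexOn ℝ ({A : Matrix m m 𝕜 | A.PosDef} ×ˢ univ)
      fun X : Matrix m m 𝕜 × Matrix m n 𝕜 => X.2ᴴ * X.1⁻¹ * X.2 := by
  refine ⟨convex_setOf_posDef.prod convex_univ, ?_⟩
  rintro ⟨A₁, B₁⟩ ⟨hA₁, -⟩ ⟨A₂, B₂⟩ ⟨hA₂, -⟩ a b ha hb hab
  have hA : (a • A₁ + b • A₂).PosDef := convex_setOf_posDef hA₁ hA₂ ha hb hab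
  have := hA.isUnit.invertible
  have hblocks : fromBlocks (a • A₁ + b • A₂) (a • B₁ + b • B₂) (a • B₁ + b • B₂)ᴴ
        (a • (B₁ᴴ * A₁⁻¹ * B₁) + b • (B₂ᴴ * A₂⁻¹ * B₂))
      = a • fromBlocks A₁ B₁ B₁ᴴ (B₁ᴴ * A₁⁻¹ * B₁)
        + b • fromBlocks A₂ B₂ B₂ᴴ (B₂ᴴ * A₂⁻¹ * B₂) := by
    simp [fromBlocks_smul, fromBlocks_add, conjTranspose_add, conjTranspose_smul]
  simp only [Prod.smul_mk, Prod.mk_add_mk, le_iff]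
  rw [← hA.fromBlocks₁₁, hblocks]
  exact ((hA₁.posSemidef_fromBlocks_conjTranspose_mul_inv_mul B₁).smul ha).add
    ((hA₂.posSemidef_fromBlocks_conjTranspose_mul_inv_mul B₂).smul hb)

theorem PosSemidef.trace_mul_nonneg [DecidableEq n] {L M : Matrix n n 𝕜} (hL : L.PosSemidef)
    (hM : M.PosSemidef) : 0 ≤ (L * M).trace := by
  obtain ⟨D, rfl⟩ := CStarAlgebra.nonneg_iff_eq_star_mul_self.mp hM.nonneg
  rw [star_eq_conjTranspose, ← Matrix.mul_assoc, trace_mul_cycle]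
  exact (hL.mul_mul_conjTranspose_same D).trace_nonneg

theorem PosSemidef.trace_mul_mono [DecidableEq n] {L : Matrix n n 𝕜} (hL : L.PosSemidef) :
    Monotone fun M => (L * M).trace := fun M N hMN => by
  simpa [Matrix.mul_sub, trace_sub] using hL.trace_mul_nonneg (le_iff.mp hMN)

end Matrix

theorem fip_eq_trace_mul {p : ℕ} {L M : Matrix (Fin p) (Fin p) ℝ} (hL : L.IsSymm) :
    fip L M = (L * M).trace := by
  rw [fip, hL.eq]

theorem rpow_trace_convex {q p : ℕ} (L : Matrix (Fin p) (Fin p) ℝ) (hL : L.PosSemidef)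
    (β : ℝ) (hβ : 1 ≤ β)
    (A₁ A₂ : Matrix (Fin q) (Fin q) ℝ) (B₁ B₂ : Matrix (Fin q) (Fin p) ℝ)
    (hA₁ : A₁.PosDef) (hA₂ : A₂.PosDef) (h : ℝ) (h0 : 0 ≤ h) (h1 : h ≤ 1) :
    Real.rpow (fip L ((h • B₁ + (1 - h) • B₂)ᵀ * (h • A₁ + (1 - h) • A₂)⁻¹
        * (h • B₁ + (1 - h) • B₂))) β
      ≤ h * Real.rpow (fip L (B₁ᵀ * A₁⁻¹ * B₁)) β
        + (1 - h) * Real.rpow (fip L (B₂ᵀ * A₂⁻¹ * B₂)) β := by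
  have h1' : 0 ≤ 1 - h := by linarith
  have hLsymm : L.IsSymm := isHermitian_iff_isSymm.mp hL.isHermitian
  have hpair (A : Matrix (Fin q) (Fin q) ℝ) (hA : A.PosDef) (B : Matrix (Fin q) (Fin p) ℝ) :
      0 ≤ fip L (Bᵀ * A⁻¹ * B) := by
    rw [fip_eq_trace_mul hLsymm, ← conjTranspose_eq_transpose_of_trivial]
    exact hL.trace_mul_nonneg (hA.inv.posSemidef.conjTranspose_mul_mul_same B)
  have hmatrix := convexOn_conjTranspose_mul_inv_mul.2 (x := (A₁, B₁)) (y := (A₂, B₂))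
    ⟨hA₁, trivial⟩ ⟨hA₂, trivial⟩ h0 h1' (by ring)
  have hscalar : fip L ((h • B₁ + (1 - h) • B₂)ᵀ * (h • A₁ + (1 - h) • A₂)⁻¹
        * (h • B₁ + (1 - h) • B₂))
      ≤ h * fip L (B₁ᵀ * A₁⁻¹ * B₁) + (1 - h) * fip L (B₂ᵀ * A₂⁻¹ * B₂) := by
    simpa [fip_eq_trace_mul hLsymm, conjTranspose_eq_transpose_of_trivial, Matrix.mul_add,
      trace_add] using hL.trace_mul_mono hmatrix
  calc _ ≤ (h * fip L (B₁ᵀ * A₁⁻¹ * B₁) + (1 - h) * fip L (B₂ᵀ * A₂⁻¹ * B₂)) ^ β :=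
        Real.rpow_le_rpow (hpair _ (convex_setOf_posDef hA₁ hA₂ h0 h1' (by ring)) _) hscalar
          (by linarith)
    _ ≤ _ := (convexOn_rpow hβ).2 (hpair _ hA₁ _) (hpair _ hA₂ _) h0 h1' (by ring)
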